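/- arXiv:1911.12023 — 3 statements merged into one kernel-verified Lean document; each statement's English description precedes it below -/
import Mathlib

section
/- Let F, Q, Φ, ω > 0 and let u be strictly increasing, strictly concave, differentiable with u(0)=0, u'(z) → 0 as z → ∞. Define θ₀ = F/u(Q) and θ₁ = Φ/(ω·u'(Q)). If ω < Φ·Q/F, then θ₀ < θ₁. -/
/-! Strict concavity with `u 0 = 0` puts the tangent line at `Q` strictly above the chord from the
origin, so `Q * u' Q < u Q` and `θ₀ = F / u Q < F / (Q * u' Q)`; the condition `ω * F < Φ * Q`
turns the latter into `F / (Q * u' Q) < Φ / (ω * u' Q) = θ₁`. -/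

lemma ConcaveOn.deriv_pos_of_strictMonoOn {S : Set ℝ} {f : ℝ → ℝ} {x y : ℝ}
    (hfc : ConcaveOn ℝ S f) (hf : StrictMonoOn f S) (hx : x ∈ S) (hy : y ∈ S) (hxy : x < y)
    (hfd : DifferentiableAt ℝ f x) : 0 < deriv f x := by
  have hslope : 0 < slope f x y := by
    rw [slope_def_field]
    exact div_pos (sub_pos.2 (hf hx hy hxy)) (sub_pos.2 hxy)
  exact hslope.trans_le (hfc.slope_le_deriv hx hy hxy hfd)

lemma StrictConcaveOn.mul_deriv_lt_of_map_zero {S : Set ℝ} {f : ℝ → ℝ} {x : ℝ}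
    (hfc : StrictConcaveOn ℝ S f) (h0 : (0 : ℝ) ∈ S) (hx : x ∈ S) (hx0 : 0 < x) (hf0 : f 0 = 0)
    (hfd : DifferentiableAt ℝ f x) : x * deriv f x < f x := by
  have h := hfc.deriv_lt_slope h0 hx hx0 hfd
  rw [slope_def_field, hf0, sub_zero, sub_zero, lt_div_iff₀ hx0] at h
  linarith

theorem theta0_lt_theta1_general
    (u : ℝ → ℝ) (F Q Φ ω : ℝ)
    (hF : 0 < F) (hQ : 0 < Q) (hω : 0 < ω)
    (hmono : StrictMonoOn u (Set.Ici (0:ℝ)))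
    (hconc : StrictConcaveOn ℝ (Set.Ici (0:ℝ)) u)
    (hdiff : ∀ z ∈ Set.Ici (0:ℝ), DifferentiableAt ℝ u z)
    (h0 : u 0 = 0)
    (hωsmall : ω < Φ * Q / F) :
    F / u Q < Φ / (ω * deriv u Q) := by
  have hQmem : Q ∈ Set.Ici (0:ℝ) := hQ.le
  have hd : 0 < deriv u Q :=
    hconc.concaveOn.deriv_pos_of_strictMonoOn hmono hQmem (Set.mem_Ici.2 (by linarith))
      (lt_add_one Q) (hdiff Q hQmem)
  have htan : Q * deriv u Q < u Q :=
    hconc.mul_deriv_lt_of_map_zero Set.self_mem_Ici hQmem hQ h0 (hdiff Q hQmem)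
  have hωF : ω * F < Φ * Q := (lt_div_iff₀ hF).1 hωsmall
  calc F / u Q < F / (Q * deriv u Q) := div_lt_div_of_pos_left hF (by positivity) htan
    _ < Φ / (ω * deriv u Q) := by
      rw [div_lt_div_iff₀ (by positivity) (by positivity)]
      linarith [mul_lt_mul_of_pos_right hωF hd]

theorem theta0_lt_theta1
    (u : ℝ → ℝ) (F Q Φ ω : ℝ)
    (hF : 0 < F) (hQ : 0 < Q) (hΦ : 0 < Φ) (hω : 0 < ω)
    (hmono : StrictMonoOn u (Set.Ici (0:ℝ)))
    (hconc : StrictConcaveOn ℝ (Set.Ici (0:ℝ)) u)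
    (hdiff : ∀ z ∈ Set.Ici (0:ℝ), DifferentiableAt ℝ u z)
    (h0 : u 0 = 0)
    (hlim : Filter.Tendsto (deriv u) Filter.atTop (nhds 0))
    (hωsmall : ω < Φ * Q / F) :
    F / u Q < Φ / (ω * deriv u Q) :=
  theta0_lt_theta1_general u F Q Φ ω hF hQ hω hmono hconc hdiff h0 hωsmall
end

section
/- Let u be strictly increasing, strictly concave, twice differentiable on [0,∞) with u(0)=0 and finite u'(0), and u'(z) → 0 as z → ∞. Let Φ, F, Q > 0 and define θ₃ = Φ/(ω·u'(0)), θ₁ = Φ/(ω·u'(Q)), and v(θ) = θ·u((u')⁻¹(Φ/(ωθ))) − (Φ/ω)·(u')⁻¹(Φ/(ωθ)) − θ·u(Q) + F. If Φ·u(Q)/(F·u'(0)) < ω < Φ·Q/F, then there exists a unique θ₄ ∈ (θ₃, θ₁) with v(θ₄) = 0. -/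
/-! Writing `c = Φ / ω`, the user of type `θ = c / u'(z)` watches `z` ads, so along this
reparametrisation `v` is a continuous function of `z ∈ [0, Q]`, positive at `z = 0` and negative
at `z = Q`; the intermediate value theorem gives a root. Uniqueness: `v θ` is the maximum over `y`
of `θ * (u y - u Q) - c * y + F`, an upper envelope of affine functions of `θ` whose slopes
`u (z θ) - u Q` at the maximisers are negative, so `v` is strictly decreasing. -/

open Set

lemma ConcaveOn.le_add_deriv_mul_sub {s : Set ℝ} {f : ℝ → ℝ} {x y : ℝ} (hf : ConcaveOn ℝ s f)
    (hx : x ∈ s) (hy : y ∈ s) (hd : DifferentiableAt ℝ f x) :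
    f y ≤ f x + deriv f x * (y - x) := by
  rcases lt_trichotomy y x with hyx | rfl | hxy
  · have h := hf.deriv_le_slope hy hx hyx hd
    rw [slope_def_field, le_div_iff₀ (sub_pos.2 hyx)] at h
    linarith
  · simp
  · have h := hf.slope_le_deriv hx hy hxy hd
    rw [slope_def_field, div_le_iff₀ (sub_pos.2 hxy)] at h
    linarith

lemma ConcaveOn.deriv_pos_of_strictMonoOn_s15 {f : ℝ → ℝ} {a x : ℝ} (hf : ConcaveOn ℝ (Ici a) f)
    (hmono : StrictMonoOn f (Ici a)) (hx : x ∈ Ici a) (hd : DifferentiableAt ℝ f x) :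
    0 < deriv f x := by
  have hx1 : x + 1 ∈ Ici a := mem_Ici.2 (le_add_of_le_of_nonneg hx zero_le_one)
  have := hf.le_add_deriv_mul_sub hx hx1 hd
  have := hmono hx hx1 (lt_add_one x)
  linarith

lemma div_mem_Ioo_iff {c p q θ : ℝ} (hp : 0 < p) (hq : 0 < q) (hθ : 0 < θ) :
    c / θ ∈ Ioo p q ↔ θ ∈ Ioo (c / q) (c / p) := by
  simp only [mem_Ioo, lt_div_iff₀ hθ, div_lt_iff₀ hθ, div_lt_iff₀ hq, lt_div_iff₀ hp]
  constructor <;> rintro ⟨h₁, h₂⟩ <;> constructor <;> linarith [mul_comm p θ, mul_comm q θ]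

/-- Payoff of a type-`θ` user watching `y` ads without subscribing, minus its payoff from
subscribing; the paper's `v θ` is `payoffGap u (Φ / ω) Q F θ (I (Φ / ω / θ))`. -/
def payoffGap (u : ℝ → ℝ) (c Q F θ y : ℝ) : ℝ := θ * u y - c * y - θ * u Q + F

section payoffGap

variable {u : ℝ → ℝ} {c Q F : ℝ}

lemma payoffGap_le_of_mul_deriv_eq {s : Set ℝ} {θ y z : ℝ} (hu : ConcaveOn ℝ s u)
    (hz : z ∈ s) (hy : y ∈ s) (hd : DifferentiableAt ℝ u z) (hθ : 0 ≤ θ)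
    (hderiv : θ * deriv u z = c) :
    payoffGap u c Q F θ y ≤ payoffGap u c Q F θ z := by
  have h := mul_le_mul_of_nonneg_left (hu.le_add_deriv_mul_sub hz hy hd) hθ
  rw [mul_add, ← mul_assoc, hderiv] at h
  unfold payoffGap
  linarith

lemma payoffGap_lt_of_lt {a b y : ℝ} (hab : a < b) (hy : u y < u Q) :
    payoffGap u c Q F b y < payoffGap u c Q F a y := by
  unfold payoffGap
  nlinarith [mul_pos (sub_pos.2 hab) (sub_pos.2 hy)]

lemma strictAntiOn_payoffGap {S : Set ℝ} {z : ℝ → ℝ} (hu : ConcaveOn ℝ (Ici 0) u)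
    (hmono : StrictMonoOn u (Ici 0)) (hd : ∀ x ∈ Ici 0, DifferentiableAt ℝ u x)
    (hz : ∀ θ ∈ S, 0 < θ ∧ θ * deriv u (z θ) = c ∧ z θ ∈ Ico 0 Q) :
    StrictAntiOn (fun θ ↦ payoffGap u c Q F θ (z θ)) S := by
  intro a ha b hb hab
  obtain ⟨ha₀, hderiv, hza, -⟩ := hz a ha
  obtain ⟨-, -, hzb, hzbQ⟩ := hz b hb
  calc payoffGap u c Q F b (z b) < payoffGap u c Q F a (z b) :=
        payoffGap_lt_of_lt hab (hmono hzb (hzb.trans hzbQ.le) hzbQ)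
    _ ≤ payoffGap u c Q F a (z a) :=
        payoffGap_le_of_mul_deriv_eq hu hza hzb (hd _ hza) ha₀.le hderiv

lemma exists_payoffGap_eq_zero (hQ : 0 ≤ Q)
    (hu : ContinuousOn u (Icc 0 Q)) (hu' : ContinuousOn (deriv u) (Icc 0 Q))
    (hne : ∀ z ∈ Icc 0 Q, deriv u z ≠ 0)
    (hpos : 0 < payoffGap u c Q F (c / deriv u 0) 0)
    (hneg : payoffGap u c Q F (c / deriv u Q) Q < 0) :
    ∃ z ∈ Ioo 0 Q, payoffGap u c Q F (c / deriv u z) z = 0 := by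
  have hcont : ContinuousOn (fun z ↦ payoffGap u c Q F (c / deriv u z) z) (Icc 0 Q) := by
    unfold payoffGap
    fun_prop (disch := assumption)
  exact intermediate_value_Ioo' hQ hcont ⟨hneg, hpos⟩

lemma payoffGap_zero_pos {Φ ω d : ℝ} (hω : 0 < ω) (hF : 0 < F) (hd : 0 < d) (h0 : u 0 = 0)
    (h : Φ * u Q / (F * d) < ω) :
    0 < payoffGap u (Φ / ω) Q F (Φ / ω / d) 0 := by
  rw [div_lt_iff₀ (mul_pos hF hd)] at h
  have : Φ / ω / d * u Q < F := by
    rw [div_mul_eq_mul_div, div_lt_iff₀ hd, div_mul_eq_mul_div, div_lt_iff₀ hω]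
    linarith
  simp only [payoffGap, h0]
  linarith

lemma payoffGap_self_neg {Φ ω θ : ℝ} (hω : 0 < ω) (hF : 0 < F) (h : ω < Φ * Q / F) :
    payoffGap u (Φ / ω) Q F θ Q < 0 := by
  rw [lt_div_iff₀ hF] at h
  have : F < Φ / ω * Q := by
    rw [div_mul_eq_mul_div, lt_div_iff₀ hω]
    linarith
  simp only [payoffGap]
  linarith

lemma inverse_deriv_div_spec {I : ℝ → ℝ} {θ : ℝ} (hc : 0 < c) (hQ : Q ∈ Ici 0)
    (hanti : StrictAntiOn (deriv u) (Ici 0)) (hpos : ∀ z ∈ Ici 0, 0 < deriv u z)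
    (hI : ∀ s ∈ Ioo 0 (deriv u 0), deriv u (I s) = s ∧ 0 ≤ I s)
    (hθ : θ ∈ Ioo (c / deriv u 0) (c / deriv u Q)) :
    0 < θ ∧ θ * deriv u (I (c / θ)) = c ∧ I (c / θ) ∈ Ico 0 Q := by
  have hθ₀ : 0 < θ := (div_pos hc (hpos 0 self_mem_Ici)).trans hθ.1
  have hs := (div_mem_Ioo_iff (hpos Q hQ) (hpos 0 self_mem_Ici) hθ₀).2 hθ
  obtain ⟨hderiv, hI₀⟩ := hI (c / θ) ⟨(hpos Q hQ).trans hs.1, hs.2⟩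
  refine ⟨hθ₀, by rw [hderiv, mul_div_cancel₀ c hθ₀.ne'], hI₀, (hanti.lt_iff_gt hQ hI₀).1 ?_⟩
  rw [hderiv]
  exact hs.1

lemma div_deriv_mem_Ioo_and_inverse_eq {I : ℝ → ℝ} {z : ℝ} (hc : 0 < c) (hQ : Q ∈ Ici 0)
    (hanti : StrictAntiOn (deriv u) (Ici 0)) (hpos : ∀ z ∈ Ici 0, 0 < deriv u z)
    (hI : ∀ s ∈ Ioo 0 (deriv u 0), deriv u (I s) = s ∧ 0 ≤ I s) (hz : z ∈ Ioo 0 Q) :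
    c / deriv u z ∈ Ioo (c / deriv u 0) (c / deriv u Q) ∧ I (c / (c / deriv u z)) = z := by
  have hz₀ : z ∈ Ici 0 := hz.1.le
  have hs : deriv u z ∈ Ioo (deriv u Q) (deriv u 0) :=
    ⟨hanti hz₀ hQ hz.2, hanti self_mem_Ici hz₀ hz.1⟩
  rw [div_div_cancel₀ hc.ne']
  obtain ⟨hderiv, hI₀⟩ := hI (deriv u z) ⟨hpos z hz₀, hs.2⟩
  refine ⟨(div_mem_Ioo_iff (hpos Q hQ) (hpos 0 self_mem_Ici) (div_pos hc (hpos z hz₀))).1 ?_,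
    hanti.injOn hI₀ hz₀ hderiv⟩
  rwa [div_div_cancel₀ hc.ne']

end payoffGap

theorem exists_unique_theta4_general
    (u I : ℝ → ℝ) (Φ ω F Q : ℝ)
    (hΦ : 0 < Φ) (hω : 0 < ω) (hF : 0 < F) (hQ : 0 < Q)
    (hmono : StrictMonoOn u (Set.Ici (0:ℝ)))
    (hconc : StrictConcaveOn ℝ (Set.Ici (0:ℝ)) u)
    (hdiff : ∀ z ∈ Set.Ici (0:ℝ), DifferentiableAt ℝ u z)
    (hdiff2 : ∀ z ∈ Set.Ici (0:ℝ), DifferentiableAt ℝ (deriv u) z)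
    (h0 : u 0 = 0)
    (hI : ∀ s ∈ Set.Ioo (0:ℝ) (deriv u 0), deriv u (I s) = s ∧ 0 ≤ I s)
    (hωlow : Φ * u Q / (F * deriv u 0) < ω) (hωhigh : ω < Φ * Q / F) :
    ∃! θ₄ : ℝ, θ₄ ∈ Set.Ioo (Φ / (ω * deriv u 0)) (Φ / (ω * deriv u Q)) ∧
      θ₄ * u (I (Φ / (ω * θ₄))) - (Φ / ω) * I (Φ / (ω * θ₄)) - θ₄ * u Q + F = 0 := by
  have hc : 0 < Φ / ω := div_pos hΦ hω
  have hQ₀ : Q ∈ Ici (0:ℝ) := hQ.le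
  have hanti : StrictAntiOn (deriv u) (Ici 0) := hconc.strictAntiOn_deriv hdiff
  have hpos : ∀ z ∈ Ici (0:ℝ), 0 < deriv u z := fun z hz ↦
    hconc.concaveOn.deriv_pos_of_strictMonoOn_s15 hmono hz (hdiff z hz)
  have hv := strictAntiOn_payoffGap (F := F) hconc.concaveOn hmono hdiff
    fun θ hθ ↦ inverse_deriv_div_spec hc hQ₀ hanti hpos hI hθ
  obtain ⟨z₀, hz₀, hw⟩ := exists_payoffGap_eq_zero hQ.le
    (fun z hz ↦ (hdiff z hz.1).continuousAt.continuousWithinAt)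
    (fun z hz ↦ (hdiff2 z hz.1).continuousAt.continuousWithinAt) (fun z hz ↦ (hpos z hz.1).ne')
    (payoffGap_zero_pos hω hF (hpos 0 self_mem_Ici) h0 hωlow) (payoffGap_self_neg hω hF hωhigh)
  obtain ⟨hθ₄, hIz⟩ := div_deriv_mem_Ioo_and_inverse_eq hc hQ₀ hanti hpos hI hz₀
  simp_rw [← div_div]
  have hv₄ :
      payoffGap u (Φ / ω) Q F (Φ / ω / deriv u z₀) (I (Φ / ω / (Φ / ω / deriv u z₀))) = 0 := by
    rwa [hIz]
  exact ⟨_, ⟨hθ₄, hv₄⟩, fun θ ⟨hθ, hvθ⟩ ↦ hv.injOn hθ hθ₄ (hvθ.trans hv₄.symm)⟩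

/-- `I` plays the role of the inverse function `(u')⁻¹` of the marginal utility. -/
theorem exists_unique_theta4
    (u I : ℝ → ℝ) (Φ ω F Q : ℝ)
    (hΦ : 0 < Φ) (hω : 0 < ω) (hF : 0 < F) (hQ : 0 < Q)
    (hmono : StrictMonoOn u (Set.Ici (0:ℝ)))
    (hconc : StrictConcaveOn ℝ (Set.Ici (0:ℝ)) u)
    (hdiff : ∀ z ∈ Set.Ici (0:ℝ), DifferentiableAt ℝ u z)
    (hdiff2 : ∀ z ∈ Set.Ici (0:ℝ), DifferentiableAt ℝ (deriv u) z)
    (h0 : u 0 = 0)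
    (hderiv0 : 0 < deriv u 0)
    (hlim : Filter.Tendsto (deriv u) Filter.atTop (nhds 0))
    (hI : ∀ s ∈ Set.Ioo (0:ℝ) (deriv u 0), deriv u (I s) = s ∧ 0 ≤ I s)
    (hωlow : Φ * u Q / (F * deriv u 0) < ω) (hωhigh : ω < Φ * Q / F) :
    ∃! θ₄ : ℝ, θ₄ ∈ Set.Ioo (Φ / (ω * deriv u 0)) (Φ / (ω * deriv u Q)) ∧
      θ₄ * u (I (Φ / (ω * θ₄))) - (Φ / ω) * I (Φ / (ω * θ₄)) - θ₄ * u Q + F = 0 :=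
  exists_unique_theta4_general u I Φ ω F Q hΦ hω hF hQ hmono hconc hdiff hdiff2 h0 hI hωlow hωhigh
end

section
/- With the setting of the previous statement (Φ·u(Q)/(F·u'(0)) < ω < Φ·Q/F), the threshold θ₄ satisfies θ₄ > θ₀ where θ₀ = F/u(Q), and dθ₄/dω = (Φ/ω²)·(u')⁻¹(Φ/(ωθ₄)) / (u(Q) − u((u')⁻¹(Φ/(ωθ₄)))) > 0, so θ₄ is strictly increasing in ω. -/
/-!
The marginal utility `u'` is strictly decreasing with limit `0`, hence positive, so
`s = Φ / (ω θ₄)` lies in `(u' Q, u' 0)` and `x = (u')⁻¹ s` lies in `(0, Q)`. Strict concavity and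
`u 0 = 0` give the tangent-line inequality `s x < u x`, and the defining equation reads
`θ₄ u(Q) - F = θ₄ (u x - s x) > 0`. Differentiating the defining equation in `ω`, the terms in
`dx/dω` cancel because `θ₄ u'(x) = Φ / ω` (envelope theorem), which leaves
`θ₄' (u Q - u x) = (Φ / ω²) x`.
-/

open Set Filter Topology

theorem StrictAntiOn.lt_of_tendsto_atTop {α β : Type*} [LinearOrder α] [NoMaxOrder α]
    [TopologicalSpace β] [PartialOrder β] [ClosedIicTopology β] {f : α → β} {a b : α} {l : β}
    (hf : StrictAntiOn f (Ici a)) (hlim : Tendsto f atTop (𝓝 l)) (hb : a ≤ b) : l < f b := by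
  have : Nonempty α := ⟨a⟩
  obtain ⟨c, hbc⟩ := exists_gt b
  have hc : c ∈ Ici a := hb.trans hbc.le
  have hlc : l ≤ f c := le_of_tendsto hlim <| by
    filter_upwards [eventually_ge_atTop c] with z hz
    exact hf.antitoneOn hc (hc.trans hz) hz
  exact hlc.trans_lt (hf hb hc hbc)

/-- Envelope theorem: `hfoc` is the first-order condition for `x t` to be a critical point of
`y ↦ a t * u y - b t * y`, so the motion of `x` does not contribute to the derivative. -/
theorem HasDerivAt.envelope {a b x u : ℝ → ℝ} {a' b' x' c t : ℝ} (ha : HasDerivAt a a' t)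
    (hb : HasDerivAt b b' t) (hx : HasDerivAt x x' t) (hu : HasDerivAt u c (x t))
    (hfoc : a t * c = b t) :
    HasDerivAt (fun t => a t * u (x t) - b t * x t) (a' * u (x t) - b' * x t) t := by
  refine ((ha.mul (hu.comp t hx)).sub (hb.mul hx)).congr_deriv ?_
  rw [← hfoc, Function.comp_apply]
  ring

theorem div_mem_Ioo_of_mem_Ioo_div {a b c θ : ℝ} (hc : 0 < c) (ha : 0 < a) (hb : 0 < b)
    (hθ : θ ∈ Ioo (c / a) (c / b)) : c / θ ∈ Ioo b a := by
  have hθ0 : 0 < θ := (div_pos hc ha).trans hθ.1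
  exact ⟨(lt_div_comm₀ hb hθ0).2 hθ.2, (div_lt_comm₀ hθ0 ha).2 hθ.1⟩

theorem StrictAntiOn.mem_Ioo_of_map_mem_Ioo {α β : Type*} [LinearOrder α] [Preorder β]
    {f : α → β} {s : Set α} {a b x : α} (hf : StrictAntiOn f s) (ha : a ∈ s) (hb : b ∈ s)
    (hx : x ∈ s) (hfx : f x ∈ Ioo (f b) (f a)) : x ∈ Ioo a b :=
  ⟨(hf.lt_iff_gt hx ha).1 hfx.2, (hf.lt_iff_gt hb hx).1 hfx.1⟩

theorem StrictConcaveOn.mul_sub_lt_sub_of_hasDerivAt {S : Set ℝ} {u : ℝ → ℝ} {x y c : ℝ}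
    (hu : StrictConcaveOn ℝ S u) (hx : x ∈ S) (hy : y ∈ S) (hxy : x < y)
    (hc : HasDerivAt u c y) : c * (y - x) < u y - u x := by
  have := hu.lt_slope_of_hasDerivAt hx hy hxy hc
  rwa [slope_def_field, lt_div_iff₀ (sub_pos.2 hxy)] at this

theorem theta4_properties_general
    (u I Θ : ℝ → ℝ) (Φ F Q : ℝ)
    (hΦ : 0 < Φ) (hF : 0 < F) (hQ : 0 < Q)
    (hmono : StrictMonoOn u (Set.Ici (0:ℝ)))
    (hconc : StrictConcaveOn ℝ (Set.Ici (0:ℝ)) u)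
    (hdiff : ∀ z ∈ Set.Ici (0:ℝ), DifferentiableAt ℝ u z)
    (h0 : u 0 = 0)
    (hlim : Filter.Tendsto (deriv u) Filter.atTop (nhds 0))
    (hI : ∀ s ∈ Set.Ioo (0:ℝ) (deriv u 0), deriv u (I s) = s ∧ 0 ≤ I s)
    (hIdiff : ∀ s ∈ Set.Ioo (0:ℝ) (deriv u 0), DifferentiableAt ℝ I s)
    (hΘdiff : ∀ ω ∈ Set.Ioo (Φ * u Q / (F * deriv u 0)) (Φ * Q / F),
      DifferentiableAt ℝ Θ ω)
    (hΘmem : ∀ ω ∈ Set.Ioo (Φ * u Q / (F * deriv u 0)) (Φ * Q / F),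
      Θ ω ∈ Set.Ioo (Φ / (ω * deriv u 0)) (Φ / (ω * deriv u Q)))
    (hΘroot : ∀ ω ∈ Set.Ioo (Φ * u Q / (F * deriv u 0)) (Φ * Q / F),
      Θ ω * u (I (Φ / (ω * Θ ω))) - (Φ / ω) * I (Φ / (ω * Θ ω)) - Θ ω * u Q + F = 0) :
    ∀ ω ∈ Set.Ioo (Φ * u Q / (F * deriv u 0)) (Φ * Q / F),
      Θ ω > F / u Q ∧
      deriv Θ ω = (Φ / ω ^ 2) * I (Φ / (ω * Θ ω)) / (u Q - u (I (Φ / (ω * Θ ω)))) ∧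
      0 < deriv Θ ω := by
  intro ω hω
  have hanti := hconc.strictAntiOn_deriv hdiff
  have hu'0 : 0 < deriv u 0 := hanti.lt_of_tendsto_atTop hlim le_rfl
  have hu'Q : 0 < deriv u Q := hanti.lt_of_tendsto_atTop hlim hQ.le
  have huQ : 0 < u Q := h0 ▸ hmono self_mem_Ici hQ.le hQ
  have hω0 : 0 < ω := lt_trans (by positivity) hω.1
  have hΘ0 : 0 < Θ ω := lt_trans (by positivity) (hΘmem ω hω).1
  set s := Φ / (ω * Θ ω)
  have hs : s ∈ Ioo (deriv u Q) (deriv u 0) := by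
    simpa only [div_div] using div_mem_Ioo_of_mem_Ioo_div (div_pos hΦ hω0) hu'0 hu'Q
      (by simpa only [div_div] using hΘmem ω hω)
  have hs' : s ∈ Ioo 0 (deriv u 0) := ⟨hu'Q.trans hs.1, hs.2⟩
  obtain ⟨hIs, hIs0⟩ := hI s hs'
  have hIsQ : I s ∈ Ioo 0 Q :=
    hanti.mem_Ioo_of_map_mem_Ioo self_mem_Ici hQ.le hIs0 (by rwa [hIs])
  have hud : HasDerivAt u s (I s) := (hdiff _ hIs0).hasDerivAt.congr_deriv hIs
  have hfoc : Θ ω * s = Φ / ω := by simp only [s]; field_simp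
  have htan := hconc.mul_sub_lt_sub_of_hasDerivAt self_mem_Ici hIs0 hIsQ.1 hud
  have hroot := hΘroot ω hω
  refine ⟨(div_lt_iff₀ huQ).2 (by nlinarith), ?_⟩
  have hΘd := (hΘdiff ω hω).hasDerivAt
  have hx : HasDerivAt (fun ω => I (Φ / (ω * Θ ω))) _ ω :=
    ((hIdiff s hs').comp ω ((differentiableAt_const Φ).div (differentiableAt_id.mul
      (hΘdiff ω hω)) (mul_pos hω0 hΘ0).ne')).hasDerivAt
  have hv := ((hΘd.envelope ((hasDerivAt_const ω Φ).div (hasDerivAt_id' ω) hω0.ne') hx hud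
    hfoc).sub (hΘd.mul_const (u Q))).add_const F
  have hv_deriv := hv.unique <| (hasDerivAt_const ω (0 : ℝ)).congr_of_eventuallyEq <|
    eventually_of_mem (isOpen_Ioo.mem_nhds hω) hΘroot
  have hden : 0 < u Q - u (I s) := sub_pos.2 (hmono hIs0 hQ.le hIsQ.2)
  have hderiv : deriv Θ ω = Φ / ω ^ 2 * I s / (u Q - u (I s)) := by
    rw [eq_div_iff hden.ne']
    linear_combination -hv_deriv
  exact ⟨hderiv, hderiv ▸ div_pos (mul_pos (by positivity) hIsQ.1) hden⟩

/-- `I` plays the role of the inverse function `(u')⁻¹` of the marginal utility,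
and `Θ` is the implicitly defined threshold `θ₄` as a function of the unit data
reward `ω`. -/
theorem theta4_properties
    (u I Θ : ℝ → ℝ) (Φ F Q : ℝ)
    (hΦ : 0 < Φ) (hF : 0 < F) (hQ : 0 < Q)
    (hmono : StrictMonoOn u (Set.Ici (0:ℝ)))
    (hconc : StrictConcaveOn ℝ (Set.Ici (0:ℝ)) u)
    (hdiff : ∀ z ∈ Set.Ici (0:ℝ), DifferentiableAt ℝ u z)
    (hdiff2 : ∀ z ∈ Set.Ici (0:ℝ), DifferentiableAt ℝ (deriv u) z)
    (h0 : u 0 = 0)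
    (hderiv0 : 0 < deriv u 0)
    (hlim : Filter.Tendsto (deriv u) Filter.atTop (nhds 0))
    (hI : ∀ s ∈ Set.Ioo (0:ℝ) (deriv u 0), deriv u (I s) = s ∧ 0 ≤ I s)
    (hIdiff : ∀ s ∈ Set.Ioo (0:ℝ) (deriv u 0), DifferentiableAt ℝ I s)
    (hΘdiff : ∀ ω ∈ Set.Ioo (Φ * u Q / (F * deriv u 0)) (Φ * Q / F),
      DifferentiableAt ℝ Θ ω)
    (hΘmem : ∀ ω ∈ Set.Ioo (Φ * u Q / (F * deriv u 0)) (Φ * Q / F),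
      Θ ω ∈ Set.Ioo (Φ / (ω * deriv u 0)) (Φ / (ω * deriv u Q)))
    (hΘroot : ∀ ω ∈ Set.Ioo (Φ * u Q / (F * deriv u 0)) (Φ * Q / F),
      Θ ω * u (I (Φ / (ω * Θ ω))) - (Φ / ω) * I (Φ / (ω * Θ ω)) - Θ ω * u Q + F = 0) :
    ∀ ω ∈ Set.Ioo (Φ * u Q / (F * deriv u 0)) (Φ * Q / F),
      Θ ω > F / u Q ∧
      deriv Θ ω = (Φ / ω ^ 2) * I (Φ / (ω * Θ ω)) / (u Q - u (I (Φ / (ω * Θ ω)))) ∧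
      0 < deriv Θ ω :=
  theta4_properties_general u I Θ Φ F Q hΦ hF hQ hmono hconc hdiff h0 hlim hI hIdiff hΘdiff hΘmem
    hΘroot
end
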